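/- arXiv:1908.07380 — 3 statements merged into one kernel-verified Lean document; each statement's English description precedes it below -/
import Mathlib

section
/- Let 0 ≤ q̂ ≤ q < 1 and let c ≥ 0. If kl(q̂ ‖ q) ≤ c, then q - q̂ ≤ √(2·q·c), where kl(q̂ ‖ q) = q̂·log(q̂/q) + (1-q̂)·log((1-q̂)/(1-q)) is the binary Kullback-Leibler divergence between Bernoulli distributions with parameters q̂ and q (with the convention 0·log 0 = 0). -/
/-!
Split `kl(q̂ ‖ q)` into its two terms. The second is at least `q - q̂` by `log y ≥ 1 - 1/y`.
For the first, `log t ≥ (t - t⁻¹)/2 = sinh (log t)` on `(0, 1]` (as `sinh u ≤ u` for `u ≤ 0`),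
applied at `t = q̂/q`, gives `q̂ log(q̂/q) ≥ (q̂² - q²)/(2q)`. The two bounds add up to
`(q - q̂)²/(2q)`.
-/

/-- Binary Kullback-Leibler divergence between Bernoulli parameters `p` and `q`:
`kl(p ‖ q) = p·log(p/q) + (1-p)·log((1-p)/(1-q))`. Note that the convention
`0·log 0 = 0` holds automatically since in Lean `Real.log 0 = 0` and `0 * x = 0`. -/
noncomputable def klBin (p q : ℝ) : ℝ :=
  p * Real.log (p / q) + (1 - p) * Real.log ((1 - p) / (1 - q))

namespace Real

theorem sub_inv_div_two_le_log {t : ℝ} (ht : 0 < t) (ht1 : t ≤ 1) : (t - t⁻¹) / 2 ≤ log t :=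
  sinh_log ht ▸ sinh_le_self_iff.mpr (log_nonpos ht.le ht1)

theorem sq_sub_sq_le_two_mul_mul_mul_log_div {p q : ℝ} (hp : 0 ≤ p) (hpq : p ≤ q) :
    p ^ 2 - q ^ 2 ≤ 2 * q * (p * log (p / q)) := by
  rcases hp.eq_or_lt with rfl | hp
  · simpa using sq_nonneg q
  have hq : 0 < q := hp.trans_le hpq
  have hlog := sub_inv_div_two_le_log (div_pos hp hq) ((div_le_one hq).mpr hpq)
  calc p ^ 2 - q ^ 2 = 2 * q * p * ((p / q - (p / q)⁻¹) / 2) := by field_simp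
    _ ≤ 2 * q * p * log (p / q) := by gcongr
    _ = 2 * q * (p * log (p / q)) := by ring

theorem sub_le_mul_log_div {a b : ℝ} (ha : 0 < a) (hb : 0 < b) : a - b ≤ a * log (a / b) :=
  calc a - b = a * (1 - (a / b)⁻¹) := by field_simp
    _ ≤ a * log (a / b) := by gcongr; exact one_sub_inv_le_log_of_pos (div_pos ha hb)

end Real

theorem sq_sub_le_two_mul_mul_klBin {p q : ℝ} (hp : 0 ≤ p) (hpq : p ≤ q) (hq : q < 1) :
    (q - p) ^ 2 ≤ 2 * q * klBin p q := by
  have hfirst := Real.sq_sub_sq_le_two_mul_mul_mul_log_div hp hpq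
  have hsecond := mul_le_mul_of_nonneg_left
    (Real.sub_le_mul_log_div (sub_pos.mpr (hpq.trans_lt hq)) (sub_pos.mpr hq))
    (by linarith : (0 : ℝ) ≤ 2 * q)
  rw [klBin, mul_add]
  linarith

theorem binary_kl_inversion_sqrt_general (qhat q c : ℝ)
    (hqhat : 0 ≤ qhat) (hle : qhat ≤ q) (hq1 : q < 1)
    (h : klBin qhat q ≤ c) :
    q - qhat ≤ Real.sqrt (2 * q * c) := by
  refine Real.le_sqrt_of_sq_le ?_
  calc (q - qhat) ^ 2 ≤ 2 * q * klBin qhat q := sq_sub_le_two_mul_mul_klBin hqhat hle hq1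
    _ ≤ 2 * q * c := by gcongr; linarith

/-- Binary KL inversion (Pinsker-type step): if `0 ≤ q̂ ≤ q < 1`, `c ≥ 0` and
`kl(q̂ ‖ q) ≤ c`, then `q - q̂ ≤ √(2·q·c)`. -/
theorem binary_kl_inversion_sqrt (qhat q c : ℝ)
    (hqhat : 0 ≤ qhat) (hle : qhat ≤ q) (hq1 : q < 1) (hc : 0 ≤ c)
    (h : klBin qhat q ≤ c) :
    q - qhat ≤ Real.sqrt (2 * q * c) :=
  binary_kl_inversion_sqrt_general qhat q c hqhat hle hq1 h
end

section
/- Let 0 ≤ q̂ ≤ q < 1 and let c ≥ 0. If kl(q̂ ‖ q) ≤ c, then for every λ ∈ (0,2) one has q ≤ q̂/(1 - λ/2) + c/(λ·(1 - λ/2)), where kl(q̂ ‖ q) = q̂·log(q̂/q) + (1-q̂)·log((1-q̂)/(1-q)) is the binary Kullback-Leibler divergence between Bernoulli distributions with parameters q̂ and q (with the convention 0·log 0 = 0). -/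
/-!
Bounding the two logarithms of `kl(q̂ ‖ q)` separately, by `log x ≥ 1 - 1/x` and by
`log x ≤ sinh (log x) = (x - 1/x)/2` for `x = q/q̂ ≥ 1`, gives exactly `(q - q̂)² ≤ 2 q kl(q̂ ‖ q)`.
Hence `q - q̂ ≤ √(2qc) ≤ λq/2 + c/λ` by AM-GM, and solving for `q` gives the bound.
-/

open Real

lemma Real.log_le_sub_inv_div_two {x : ℝ} (hx : 1 ≤ x) : log x ≤ (x - x⁻¹) / 2 := by
  rw [← sinh_log (by linarith)]
  exact self_le_sinh_iff.2 (log_nonneg hx)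

lemma Real.sub_le_mul_log_div_s4 {a b : ℝ} (ha : 0 < a) (hb : 0 < b) : a - b ≤ a * log (a / b) := by
  have := one_sub_inv_le_log_of_pos (div_pos ha hb)
  rw [inv_div] at this
  calc a - b = a * (1 - b / a) := by field_simp
    _ ≤ a * log (a / b) := by gcongr

lemma Real.sq_sub_sq_le_two_mul_mul_log_div {a b : ℝ} (ha : 0 ≤ a) (hab : a ≤ b) :
    a ^ 2 - b ^ 2 ≤ 2 * b * (a * log (a / b)) := by
  rcases ha.eq_or_lt with rfl | ha
  · simpa using sq_nonneg b
  have hb : 0 < b := ha.trans_le hab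
  have hlog := log_le_sub_inv_div_two ((one_le_div ha).2 hab)
  rw [← neg_le_neg_iff, ← log_inv, inv_div] at hlog
  calc a ^ 2 - b ^ 2 = 2 * b * (a * -((b / a - a / b) / 2)) := by field_simp; ring
    _ ≤ 2 * b * (a * log (a / b)) := by gcongr

lemma sq_sub_le_two_mul_klBin {p q : ℝ} (hp : 0 ≤ p) (hpq : p ≤ q) (hq1 : q < 1) :
    (q - p) ^ 2 ≤ 2 * q * klBin p q := by
  have hq : 0 ≤ q := hp.trans hpq
  have h₁ := sq_sub_sq_le_two_mul_mul_log_div hp hpq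
  have h₂ := sub_le_mul_log_div_s4 (a := 1 - p) (b := 1 - q) (by linarith) (by linarith)
  calc (q - p) ^ 2 = (p ^ 2 - q ^ 2) + 2 * q * ((1 - p) - (1 - q)) := by ring
    _ ≤ 2 * q * (p * log (p / q)) + 2 * q * ((1 - p) * log ((1 - p) / (1 - q))) := by
      gcongr
    _ = 2 * q * klBin p q := by rw [klBin]; ring

lemma le_mul_div_two_add_div_of_sq_le {d q c t : ℝ} (hq : 0 ≤ q) (hc : 0 ≤ c) (ht : 0 < t)
    (h : d ^ 2 ≤ 2 * q * c) : d ≤ t * q / 2 + c / t := by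
  refine le_of_sq_le_sq (h.trans ?_) (by positivity)
  calc 2 * q * c = 4 * (t * q / 2) * (c / t) := by field_simp; ring
    _ ≤ (t * q / 2 + c / t) ^ 2 := four_mul_le_sq_add _ _

/-- Binary KL inversion, lambda form: if `0 ≤ q̂ ≤ q < 1`, `c ≥ 0` and
`kl(q̂ ‖ q) ≤ c`, then for every `λ ∈ (0,2)`,
`q ≤ q̂/(1 - λ/2) + c/(λ·(1 - λ/2))`. -/
theorem binary_kl_inversion_lambda (qhat q c : ℝ)
    (hqhat : 0 ≤ qhat) (hle : qhat ≤ q) (hq1 : q < 1) (hc : 0 ≤ c)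
    (h : klBin qhat q ≤ c)
    (lam : ℝ) (hlam0 : 0 < lam) (hlam2 : lam < 2) :
    q ≤ qhat / (1 - lam / 2) + c / (lam * (1 - lam / 2)) := by
  have hq : 0 ≤ q := hqhat.trans hle
  have hsq : (q - qhat) ^ 2 ≤ 2 * q * c :=
    (sq_sub_le_two_mul_klBin hqhat hle hq1).trans (by gcongr)
  have hgap := le_mul_div_two_add_div_of_sq_le hq hc hlam0 hsq
  rw [← div_div, ← add_div, le_div_iff₀ (by linarith)]
  linarith
end

section
/- Let μ₀, μ₁ ∈ ℝ and b₀, b₁ > 0. Let Lap(μ, b) denote the probability measure on ℝ with density x ↦ (2b)⁻¹·exp(−|x−μ|/b) with respect to Lebesgue measure. Then the Kullback-Leibler divergence satisfies KL( Lap(μ₁, b₁) ‖ Lap(μ₀, b₀) ) = log(b₀/b₁) + |μ₁ − μ₀|/b₀ + (b₁/b₀)·exp(−|μ₁ − μ₀|/b₁) − 1. -/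
/-!
The Radon-Nikodym derivative of `Lap(μ₁, b₁)` with respect to `Lap(μ₀, b₀)` is the ratio of the
densities, whose logarithm is `log (b₀ / b₁) + |x - μ₀| / b₀ - |x - μ₁| / b₁`. So the divergence is
`log (b₀ / b₁) + E|X - μ₀| / b₀ - E|X - μ₁| / b₁` for `X ~ Lap(μ₁, b₁)`, and everything reduces to
the absolute moments `E|X - c| = |c - μ| + b exp (-|c - μ| / b)` of `X ~ Lap(μ, b)`. These are
computed by symmetrisation: since `|x - c| + |x + c| = 2 max |x| |c|`, the integral of
`|x - c| exp (-|x| / b)` is that of `max |x| |c| exp (-|x| / b)`, an even function.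
-/

open MeasureTheory

/-- The Laplace distribution on `ℝ` with location parameter `μ` and scale
parameter `b`: the measure with density `x ↦ (2b)⁻¹·exp(−|x−μ|/b)` with respect
to Lebesgue measure. -/
noncomputable def laplaceMeasure (μ b : ℝ) : Measure ℝ :=
  volume.withDensity fun x => ENNReal.ofReal ((2 * b)⁻¹ * Real.exp (-|x - μ| / b))

/-- The Kullback-Leibler divergence `KL(Q ‖ Q') = ∫ log (dQ/dQ') dQ`, as a real
number, where `dQ/dQ'` is the Radon-Nikodym derivative. -/
noncomputable def klDiv {α : Type*} [MeasurableSpace α] (Q Q' : Measure α) : ℝ :=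
  ∫ x, Real.log ((Q.rnDeriv Q') x).toReal ∂Q

open Real Set Filter Topology

theorem klDiv_withDensity_ofReal {α : Type*} [MeasurableSpace α] {μ : Measure α} [SigmaFinite μ]
    {p q : α → ℝ} (hp : AEMeasurable p μ) (hq : AEMeasurable q μ) (hp₀ : 0 ≤ᵐ[μ] p)
    (hq₀ : ∀ᵐ x ∂μ, 0 < q x) :
    klDiv (μ.withDensity fun x => ENNReal.ofReal (p x))
        (μ.withDensity fun x => ENNReal.ofReal (q x)) =
      ∫ x, p x * log (p x / q x) ∂μ := by
  have : SigmaFinite (μ.withDensity fun x => ENNReal.ofReal (p x)) :=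
    SigmaFinite.withDensity_of_ne_top (ae_of_all _ fun _ => ENNReal.ofReal_ne_top)
  have hrnDeriv := Measure.rnDeriv_withDensity_right
    (μ.withDensity fun x => ENNReal.ofReal (p x)) μ hq.ennreal_ofReal
    (hq₀.mono fun x hx => by simpa using hx)
    (ae_of_all _ fun _ => ENNReal.ofReal_ne_top)
  rw [klDiv, integral_withDensity_eq_integral_toReal_smul₀ hp.ennreal_ofReal
    (ae_of_all _ fun _ => ENNReal.ofReal_lt_top)]
  refine integral_congr_ae ?_
  filter_upwards [hrnDeriv, Measure.rnDeriv_withDensity₀ μ hp.ennreal_ofReal, hp₀, hq₀]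
    with x hrn hrnp hpx hqx
  rw [hrn, hrnp, ENNReal.toReal_mul, ENNReal.toReal_inv, ENNReal.toReal_ofReal hpx,
    ENNReal.toReal_ofReal hqx.le, smul_eq_mul, inv_mul_eq_div]

theorem abs_sub_add_abs_add (x c : ℝ) : |x - c| + |x + c| = 2 * max |x| |c| := by
  grind

section ExpDecay

variable {b : ℝ}

theorem integral_Ioi_exp_neg_div (hb : 0 < b) (a : ℝ) :
    ∫ x in Ioi a, exp (-x / b) = b * exp (-a / b) := by
  have h := integral_exp_mul_Ioi (neg_lt_zero.2 (inv_pos.2 hb)) a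
  simp only [neg_mul, ← neg_div, inv_mul_eq_div, div_neg, neg_neg, div_inv_eq_mul] at h
  rw [h]; ring

-- A non-integrable function has integral `0`.
theorem integrableOn_Ioi_exp_neg_div (hb : 0 < b) (a : ℝ) :
    IntegrableOn (fun x => exp (-x / b)) (Ioi a) :=
  .of_integral_ne_zero <| by rw [integral_Ioi_exp_neg_div hb]; positivity

theorem integral_Ioi_sub_mul_exp_neg_div (hb : 0 < b) (a : ℝ) :
    ∫ x in Ioi a, (x - a) * exp (-x / b) = b ^ 2 * exp (-a / b) := by
  have hderiv : ∀ x ∈ Ici a, HasDerivAt (fun x => -b * (x - a + b) * exp (-x / b))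
      ((x - a) * exp (-x / b)) x := by
    intro x _
    have := ((((hasDerivAt_id' x).sub_const a).add_const b).const_mul (-b)).fun_mul
      ((hasDerivAt_id' x).neg.div_const b).exp
    exact this.congr_deriv (by simp only [Pi.neg_apply]; field_simp; ring)
  have hlim : Tendsto (fun x => -b * (x - a + b) * exp (-x / b)) atTop (𝓝 0) := by
    have h₀ := tendsto_rpow_mul_exp_neg_mul_atTop_nhds_zero 0 b⁻¹ (inv_pos.2 hb)
    have h₁ := tendsto_rpow_mul_exp_neg_mul_atTop_nhds_zero 1 b⁻¹ (inv_pos.2 hb)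
    have h := (h₁.const_mul (-b)).add (h₀.const_mul (-b * (b - a)))
    rw [mul_zero, mul_zero, add_zero] at h
    refine h.congr fun x => ?_
    rw [rpow_zero, rpow_one, show -b⁻¹ * x = -x / b by ring]
    ring
  rw [integral_Ioi_of_hasDerivAt_of_nonneg' hderiv
    (fun x hx => mul_nonneg (sub_nonneg.2 (le_of_lt hx)) (exp_pos _).le) hlim]
  ring

theorem integrableOn_Ioi_sub_mul_exp_neg_div (hb : 0 < b) (a : ℝ) :
    IntegrableOn (fun x => (x - a) * exp (-x / b)) (Ioi a) :=
  .of_integral_ne_zero <| by rw [integral_Ioi_sub_mul_exp_neg_div hb]; positivity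

theorem integral_Ioi_zero_max_mul_exp_neg_div (hb : 0 < b) {a : ℝ} (ha : 0 ≤ a) :
    ∫ x in Ioi 0, max x a * exp (-x / b) = a * b + b ^ 2 * exp (-a / b) := by
  have hsplit : (fun x => max x a * exp (-x / b)) =
      fun x => a * exp (-x / b) + (Ioi a).indicator (fun x => (x - a) * exp (-x / b)) x := by
    ext x
    rcases le_or_gt x a with hx | hx
    · simp [hx]
    · simp only [max_eq_left hx.le, indicator_of_mem (mem_Ioi.2 hx)]
      ring
  have hind : Integrable ((Ioi a).indicator fun x => (x - a) * exp (-x / b)) :=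
    (integrable_indicator_iff measurableSet_Ioi).2 (integrableOn_Ioi_sub_mul_exp_neg_div hb a)
  rw [hsplit, integral_add ((integrableOn_Ioi_exp_neg_div hb 0).const_mul a) hind.integrableOn,
    integral_const_mul, setIntegral_indicator measurableSet_Ioi, Ioi_inter_Ioi, max_eq_right ha,
    integral_Ioi_exp_neg_div hb, integral_Ioi_sub_mul_exp_neg_div hb]
  simp

theorem integral_exp_neg_abs_div (hb : 0 < b) : ∫ x, exp (-|x| / b) = 2 * b := by
  rw [integral_comp_abs (f := fun x => exp (-x / b)), integral_Ioi_exp_neg_div hb]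
  simp

theorem integral_max_abs_mul_exp_neg_abs_div (hb : 0 < b) {a : ℝ} (ha : 0 ≤ a) :
    ∫ x, max |x| a * exp (-|x| / b) = 2 * (a * b + b ^ 2 * exp (-a / b)) := by
  rw [integral_comp_abs (f := fun x => max x a * exp (-x / b)),
    integral_Ioi_zero_max_mul_exp_neg_div hb ha]

theorem integrable_abs_sub_mul_exp_neg_abs_div (hb : 0 < b) (c : ℝ) :
    Integrable fun x => |x - c| * exp (-|x| / b) := by
  have hmax : Integrable fun x => max |x| |c| * exp (-|x| / b) :=
    .of_integral_ne_zero <| by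
      rw [integral_max_abs_mul_exp_neg_abs_div hb (abs_nonneg c)]; positivity
  refine (hmax.const_mul 2).mono' (by fun_prop) (ae_of_all _ fun x => ?_)
  rw [norm_mul, Real.norm_eq_abs, abs_abs, Real.norm_eq_abs, abs_of_pos (exp_pos _), ← mul_assoc]
  gcongr
  calc |x - c| ≤ |x| + |c| := abs_sub _ _
    _ ≤ 2 * max |x| |c| := by linarith [le_max_left |x| |c|, le_max_right |x| |c|]

theorem integral_abs_sub_mul_exp_neg_abs_div (hb : 0 < b) (c : ℝ) :
    ∫ x, |x - c| * exp (-|x| / b) = 2 * (|c| * b + b ^ 2 * exp (-|c| / b)) := by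
  have hreflect : ∫ x, |x + c| * exp (-|x| / b) = ∫ x, |x - c| * exp (-|x| / b) := by
    rw [← integral_neg_eq_self]
    simp only [abs_neg, show ∀ x : ℝ, -x + c = -(x - c) by intro x; ring]
  have hsum : ∀ x, |x - c| * exp (-|x| / b) + |x + c| * exp (-|x| / b) =
      2 * (max |x| |c| * exp (-|x| / b)) := by
    intro x
    rw [← add_mul, abs_sub_add_abs_add, mul_assoc]
  have := integral_add (integrable_abs_sub_mul_exp_neg_abs_div hb c)
    (by simpa using integrable_abs_sub_mul_exp_neg_abs_div hb (-c))
  rw [hreflect, funext hsum, integral_const_mul,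
    integral_max_abs_mul_exp_neg_abs_div hb (abs_nonneg c)] at this
  linarith

end ExpDecay

noncomputable def laplacePDF (μ b x : ℝ) : ℝ := (2 * b)⁻¹ * exp (-|x - μ| / b)

section Laplace

variable {μ b : ℝ}

theorem laplacePDF_pos (hb : 0 < b) (x : ℝ) : 0 < laplacePDF μ b x := by
  unfold laplacePDF; positivity

@[fun_prop]
theorem measurable_laplacePDF : Measurable (laplacePDF μ b) := by
  unfold laplacePDF; fun_prop

theorem integral_laplacePDF (hb : 0 < b) : ∫ x, laplacePDF μ b x = 1 := by
  simp only [laplacePDF]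
  rw [integral_const_mul, integral_sub_right_eq_self (fun x => exp (-|x| / b)),
    integral_exp_neg_abs_div hb]
  field_simp

theorem integrable_laplacePDF (hb : 0 < b) : Integrable (laplacePDF μ b) :=
  .of_integral_ne_zero <| by rw [integral_laplacePDF hb]; exact one_ne_zero

theorem integral_abs_sub_mul_laplacePDF (hb : 0 < b) (c : ℝ) :
    ∫ x, |x - c| * laplacePDF μ b x = |c - μ| + b * exp (-|c - μ| / b) := by
  have hshift : ∀ x, |x - c| * laplacePDF μ b x =
      (2 * b)⁻¹ * (|(x - μ) - (c - μ)| * exp (-|x - μ| / b)) := by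
    intro x; simp only [laplacePDF, sub_sub_sub_cancel_right]; ring
  simp only [hshift]
  rw [integral_const_mul, integral_sub_right_eq_self (fun x => |x - (c - μ)| * exp (-|x| / b)),
    integral_abs_sub_mul_exp_neg_abs_div hb]
  field_simp

theorem integrable_abs_sub_mul_laplacePDF (hb : 0 < b) (c : ℝ) :
    Integrable fun x => |x - c| * laplacePDF μ b x :=
  .of_integral_ne_zero <| by rw [integral_abs_sub_mul_laplacePDF hb]; positivity

end Laplace

theorem log_laplacePDF_div_laplacePDF {μ₀ μ₁ b₀ b₁ : ℝ} (hb₀ : 0 < b₀) (hb₁ : 0 < b₁) (x : ℝ) :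
    log (laplacePDF μ₁ b₁ x / laplacePDF μ₀ b₀ x) =
      log (b₀ / b₁) + |x - μ₀| / b₀ - |x - μ₁| / b₁ := by
  rw [log_div (laplacePDF_pos hb₁ x).ne' (laplacePDF_pos hb₀ x).ne', laplacePDF, laplacePDF,
    log_mul (by positivity) (exp_pos _).ne', log_mul (by positivity) (exp_pos _).ne',
    log_exp, log_exp, log_inv, log_inv, log_mul two_ne_zero hb₀.ne',
    log_mul two_ne_zero hb₁.ne', log_div hb₀.ne' hb₁.ne']
  ring

/-- KL divergence between two Laplace distributions:
`KL(Lap(μ₁,b₁) ‖ Lap(μ₀,b₀)) = log(b₀/b₁) + |μ₁−μ₀|/b₀ + (b₁/b₀)·exp(−|μ₁−μ₀|/b₁) − 1`. -/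
theorem klDiv_laplace (μ₀ μ₁ b₀ b₁ : ℝ) (hb₀ : 0 < b₀) (hb₁ : 0 < b₁) :
    klDiv (laplaceMeasure μ₁ b₁) (laplaceMeasure μ₀ b₀) =
      Real.log (b₀ / b₁) + |μ₁ - μ₀| / b₀ +
        (b₁ / b₀) * Real.exp (-|μ₁ - μ₀| / b₁) - 1 := by
  have hKL : klDiv (laplaceMeasure μ₁ b₁) (laplaceMeasure μ₀ b₀) =
      ∫ x, laplacePDF μ₁ b₁ x * log (laplacePDF μ₁ b₁ x / laplacePDF μ₀ b₀ x) :=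
    klDiv_withDensity_ofReal (by fun_prop) (by fun_prop)
      (ae_of_all _ fun x => (laplacePDF_pos hb₁ x).le) (ae_of_all _ (laplacePDF_pos hb₀))
  have hexpand : ∀ x, laplacePDF μ₁ b₁ x * log (laplacePDF μ₁ b₁ x / laplacePDF μ₀ b₀ x) =
      log (b₀ / b₁) * laplacePDF μ₁ b₁ x + b₀⁻¹ * (|x - μ₀| * laplacePDF μ₁ b₁ x) -
        b₁⁻¹ * (|x - μ₁| * laplacePDF μ₁ b₁ x) := by
    intro x
    rw [log_laplacePDF_div_laplacePDF hb₀ hb₁]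
    ring
  have hint₀ := integrable_abs_sub_mul_laplacePDF hb₁ (μ := μ₁) μ₀
  have hint₁ := integrable_abs_sub_mul_laplacePDF hb₁ (μ := μ₁) μ₁
  have hint := (integrable_laplacePDF hb₁ (μ := μ₁)).const_mul (log (b₀ / b₁))
  rw [hKL, funext hexpand, integral_sub (hint.fun_add (hint₀.const_mul _)) (hint₁.const_mul _),
    integral_add hint (hint₀.const_mul _),
    integral_const_mul, integral_const_mul, integral_const_mul, integral_laplacePDF hb₁,
    integral_abs_sub_mul_laplacePDF hb₁, integral_abs_sub_mul_laplacePDF hb₁, abs_sub_comm μ₀ μ₁,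
    sub_self, abs_zero, neg_zero, zero_div, exp_zero]
  field_simp
  ring
end
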